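/- arXiv:2208.01777 — 2 statements merged into one kernel-verified Lean document; each statement's English description precedes it below -/
import Mathlib

section
/- If f : ℝⁿ → ℝ is strictly convex, differentiable, and 1-coercive, then for every y ∈ ℝⁿ the supremum in the definition of the conjugate is attained at a unique point, and ∇f*(y) = argmax_x (⟨y,x⟩ − f(x)). -/
open Filter Set RealInnerProductSpace

noncomputable def fenchel {n : ℕ} (f : EuclideanSpace ℝ (Fin n) → ℝ)
    (y : EuclideanSpace ℝ (Fin n)) : ℝ :=
  sSup (Set.range fun x => ⟪y, x⟫ - f x)

def Coercive1 {n : ℕ} (f : EuclideanSpace ℝ (Fin n) → ℝ) : Prop :=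
  Tendsto (fun x => f x / ‖x‖) (Filter.comap norm Filter.atTop) Filter.atTop

/-!
Being convex and finite on `ℝⁿ`, `f` is continuous. For each `y`, 1-coercivity makes
`x ↦ f x - ⟪y, x⟫` tend to `+∞` at infinity, uniformly for `y` in a bounded set, so it attains its
minimum, and strict convexity makes the minimiser `g y` unique. The uniform bound keeps `g`
locally bounded, and every cluster point of `g` at `y` is again a maximiser of `⟪y, ·⟫ - f`, so
`g` is continuous. Finally, comparing `x = g y` and `x = g z` in both suprema squeezes
`f* z - f* y - ⟪g y, z - y⟫` between `0` and `⟪z - y, g z - g y⟫`, which is `o(‖z - y‖)` by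
continuity of `g`.
-/

open Bornology Metric Topology

section Conjugate

variable {E : Type*} [NormedAddCommGroup E] [InnerProductSpace ℝ E] {f : E → ℝ}

theorem isBounded_setOf_sub_inner_le (hf : Tendsto (fun x => f x / ‖x‖) (cobounded E) atTop)
    (r c : ℝ) : IsBounded {x | ∃ y, ‖y‖ ≤ r ∧ f x - ⟪y, x⟫ ≤ c} := by
  rw [isBounded_def]
  filter_upwards [hf.eventually_ge_atTop (r + 1),
    tendsto_norm_cobounded_atTop.eventually_gt_atTop (max c 0)] with x hslope hnorm
  rintro ⟨y, hy, hxy⟩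
  have hx : 0 < ‖x‖ := (le_max_right c 0).trans_lt hnorm
  have hfx : (r + 1) * ‖x‖ ≤ f x := (le_div_iff₀ hx).1 hslope
  have hinner : ⟪y, x⟫ ≤ r * ‖x‖ :=
    (real_inner_le_norm y x).trans (mul_le_mul_of_nonneg_right hy (norm_nonneg x))
  linarith [le_max_left c 0]

theorem tendsto_sub_inner_cobounded (hf : Tendsto (fun x => f x / ‖x‖) (cobounded E) atTop)
    (y : E) : Tendsto (fun x => f x - ⟪y, x⟫) (cobounded E) atTop := by
  refine tendsto_atTop.2 fun c => ?_
  filter_upwards [isBounded_def.1 (isBounded_setOf_sub_inner_le hf ‖y‖ c)] with x hx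
  by_contra! hlt
  exact hx ⟨y, le_rfl, hlt.le⟩

theorem exists_forall_inner_sub_le [ProperSpace E] (hcont : Continuous f)
    (hf : Tendsto (fun x => f x / ‖x‖) (cobounded E) atTop) (y : E) :
    ∃ x, ∀ z, ⟪y, z⟫ - f z ≤ ⟪y, x⟫ - f x := by
  obtain ⟨x, hx⟩ := (show Continuous fun x => f x - ⟪y, x⟫ by fun_prop).exists_forall_le
    (cobounded_eq_cocompact (α := E) ▸ tendsto_sub_inner_cobounded hf y)
  exact ⟨x, fun z => by linarith [hx z]⟩

theorem eq_of_forall_inner_sub_le (hsc : StrictConvexOn ℝ univ f) {y x₁ x₂ : E}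
    (h₁ : ∀ z, ⟪y, z⟫ - f z ≤ ⟪y, x₁⟫ - f x₁) (h₂ : ∀ z, ⟪y, z⟫ - f z ≤ ⟪y, x₂⟫ - f x₂) :
    x₁ = x₂ :=
  (((innerₗ E y).concaveOn convex_univ).sub_strictConvexOn hsc).eq_of_isMaxOn
    (isMaxOn_univ_iff.2 h₁) (isMaxOn_univ_iff.2 h₂) (mem_univ _) (mem_univ _)

theorem forall_inner_sub_le_of_mapClusterPt (hcont : Continuous f) {g : E → E}
    (hg : ∀ y z, ⟪y, z⟫ - f z ≤ ⟪y, g y⟫ - f (g y)) {x y : E} (hx : MapClusterPt x (𝓝 y) g)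
    (w : E) : ⟪y, w⟫ - f w ≤ ⟪y, x⟫ - f x := by
  have hgraph : MapClusterPt (y, x) (𝓝 y) fun z => (z, g z) := by
    rw [((𝓝 y).basis_sets.prod_nhds (𝓝 x).basis_sets).mapClusterPt_iff_frequently]
    rintro ⟨s, t⟩ ⟨hs, ht⟩
    exact ((mapClusterPt_iff_frequently.1 hx t ht).and_eventually hs).mono fun z hz => ⟨hz.2, hz.1⟩
  have hclosed : IsClosed {p : E × E | ⟪p.1, w⟫ - f w ≤ ⟪p.1, p.2⟫ - f p.2} :=
    isClosed_le (by fun_prop) (by fun_prop)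
  exact hclosed.mem_of_mapClusterPt hgraph (Eventually.of_forall fun z => hg z w)

theorem continuous_of_forall_inner_sub_le [ProperSpace E] (hsc : StrictConvexOn ℝ univ f)
    (hcont : Continuous f) (hf : Tendsto (fun x => f x / ‖x‖) (cobounded E) atTop) {g : E → E}
    (hg : ∀ y z, ⟪y, z⟫ - f z ≤ ⟪y, g y⟫ - f (g y)) : Continuous g := by
  refine continuous_iff_continuousAt.2 fun y => ?_
  set S := {x | ∃ z, ‖z‖ ≤ ‖y‖ + 1 ∧ f x - ⟪z, x⟫ ≤ f 0}
  have hmem : ∀ᶠ z in 𝓝 y, g z ∈ closure S := by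
    filter_upwards [closedBall_mem_nhds y one_pos] with z hz
    refine subset_closure ⟨z, ?_, by linarith [hg z 0, inner_zero_right (𝕜 := ℝ) z]⟩
    linarith [norm_le_norm_add_norm_sub' z y, dist_eq_norm z y ▸ mem_closedBall.1 hz]
  refine (isBounded_setOf_sub_inner_le hf _ _).isCompact_closure.tendsto_nhds_of_unique_mapClusterPt
    hmem fun x _ hx => ?_
  exact eq_of_forall_inner_sub_le hsc (forall_inner_sub_le_of_mapClusterPt hcont hg hx) (hg y)

theorem hasGradientAt_of_forall_inner_sub_le [CompleteSpace E] {φ : E → ℝ} {g : E → E}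
    (hg : ∀ y z, ⟪y, z⟫ - f z ≤ ⟪y, g y⟫ - f (g y)) (hφ : ∀ y, φ y = ⟪y, g y⟫ - f (g y)) {y : E}
    (hgy : ContinuousAt g y) : HasGradientAt φ (g y) y := by
  rw [hasGradientAt_iff_isLittleO, Asymptotics.isLittleO_iff]
  intro c hc
  filter_upwards [hgy.eventually (ball_mem_nhds (g y) hc)] with z hz
  have hlower : 0 ≤ φ z - φ y - ⟪g y, z - y⟫ := by
    rw [hφ, hφ, inner_sub_right]
    linarith [hg z (g y), real_inner_comm (g y) z, real_inner_comm (g y) y]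
  have hupper : φ z - φ y - ⟪g y, z - y⟫ ≤ ⟪z - y, g z - g y⟫ := by
    rw [hφ, hφ, inner_sub_left, inner_sub_right, inner_sub_right, inner_sub_right]
    linarith [hg y (g z), real_inner_comm (g y) z, real_inner_comm (g y) y]
  rw [Real.norm_of_nonneg hlower]
  calc φ z - φ y - ⟪g y, z - y⟫ ≤ ‖z - y‖ * ‖g z - g y‖ := hupper.trans (real_inner_le_norm _ _)
    _ ≤ c * ‖z - y‖ := by
      rw [mul_comm]
      exact mul_le_mul_of_nonneg_right (dist_eq_norm (g z) (g y) ▸ (mem_ball.1 hz).le)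
        (norm_nonneg _)

end Conjugate

theorem fenchel_eq_of_forall_le {n : ℕ} {f : EuclideanSpace ℝ (Fin n) → ℝ}
    {x y : EuclideanSpace ℝ (Fin n)} (h : ∀ z, ⟪y, z⟫ - f z ≤ ⟪y, x⟫ - f x) :
    fenchel f y = ⟪y, x⟫ - f x :=
  IsGreatest.csSup_eq ⟨⟨x, rfl⟩, by rintro _ ⟨z, rfl⟩; exact h z⟩

theorem stmt5_general {n : ℕ} (f : EuclideanSpace ℝ (Fin n) → ℝ)
    (hsc : StrictConvexOn ℝ Set.univ f)
    (hcoer : Coercive1 f) :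
    (∀ y, ∃! x, ∀ z, ⟪y, z⟫ - f z ≤ ⟪y, x⟫ - f x) ∧
    ∃ g : EuclideanSpace ℝ (Fin n) → EuclideanSpace ℝ (Fin n),
      (∀ y, HasGradientAt (fenchel f) (g y) y) ∧
      ∀ y z, ⟪y, z⟫ - f z ≤ ⟪y, g y⟫ - f (g y) := by
  have hcont : Continuous f := continuousOn_univ.1 (hsc.convexOn.continuousOn isOpen_univ)
  have hf : Tendsto (fun x => f x / ‖x‖) (cobounded _) atTop := by
    rw [← comap_norm_atTop]; exact hcoer
  choose g hg using exists_forall_inner_sub_le hcont hf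
  have hgc : Continuous g := continuous_of_forall_inner_sub_le hsc hcont hf hg
  refine ⟨fun y => ⟨g y, hg y, fun x hx => eq_of_forall_inner_sub_le hsc hx (hg y)⟩, g,
    fun y => hasGradientAt_of_forall_inner_sub_le hg (fun y => fenchel_eq_of_forall_le (hg y))
      hgc.continuousAt, hg⟩

theorem stmt5 {n : ℕ} (f : EuclideanSpace ℝ (Fin n) → ℝ)
    (hsc : StrictConvexOn ℝ Set.univ f) (hdiff : Differentiable ℝ f)
    (hcoer : Coercive1 f) :
    (∀ y, ∃! x, ∀ z, ⟪y, z⟫ - f z ≤ ⟪y, x⟫ - f x) ∧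
    ∃ g : EuclideanSpace ℝ (Fin n) → EuclideanSpace ℝ (Fin n),
      (∀ y, HasGradientAt (fenchel f) (g y) y) ∧
      ∀ y z, ⟪y, z⟫ - f z ≤ ⟪y, g y⟫ - f (g y) :=
  stmt5_general f hsc hcoer
end

section
/- Let hᵢ : ℝⁿ → ℝ be differentiable convex functions. A point (y₁*,…,y_m*) with Σᵢ yᵢ* = 0 is optimal for min Σᵢ hᵢ*(yᵢ) subject to Σᵢ yᵢ = 0 (with each hᵢ* differentiable at yᵢ*) if and only if ∇h₁*(y₁*) = ⋯ = ∇h_m*(y_m*); and in that case the common value s* := ∇hᵢ*(yᵢ*) is an optimal solution of the primal consensus problem min_s Σᵢ hᵢ(s). -/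
open Filter Set RealInnerProductSpace

/-!
The gradient of `h*` at `y` is the maximiser of `x ↦ ⟪y, x⟫ - h x`: a maximiser `x₀` exists by
continuity and coercivity, the Fenchel–Young inequality makes `x₀` a subgradient of `h*` at `y`,
and a gradient equals every subgradient. If `y*` is optimal, perturbing it to
`yᵢ* + t v, yⱼ* - t v` and differentiating at `t = 0` forces all gradients to agree. Conversely a
common gradient `s` is a common subgradient, and summing the subgradient inequalities
`hᵢ*(yᵢ*) + ⟪yᵢ - yᵢ*, s⟫ ≤ hᵢ*(yᵢ)` gives optimality, since the linear terms cancel when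
`∑ yᵢ = ∑ yᵢ* = 0`. The same cancellation in `hᵢ(s) + ⟪yᵢ*, z - s⟫ ≤ hᵢ(z)` shows that `s`
minimises `∑ hᵢ`.
-/

section Gradient

variable {F : Type*} [NormedAddCommGroup F] [InnerProductSpace ℝ F] [CompleteSpace F]

lemma HasGradientAt.hasLineDerivAt {Φ : F → ℝ} {G y : F} (hΦ : HasGradientAt Φ G y)
    (v : F) : HasLineDerivAt ℝ Φ ⟪G, v⟫ y v := by
  simpa using hΦ.hasFDerivAt.hasLineDerivAt v

lemma HasGradientAt.eq_of_forall_add_inner_le {Φ : F → ℝ} {G s y : F}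
    (hΦ : HasGradientAt Φ G y) (hs : ∀ y', Φ y + ⟪s, y' - y⟫ ≤ Φ y') : G = s := by
  have hmin : IsLocalMin (fun y' => Φ y' - InnerProductSpace.toDual ℝ F s y') y :=
    Eventually.of_forall fun y' => by
      have := hs y'
      simp only [InnerProductSpace.toDual_apply_apply, inner_sub_right] at *
      linarith
  have hderiv := hmin.hasFDerivAt_eq_zero
    (hΦ.hasFDerivAt.sub (InnerProductSpace.toDual ℝ F s).hasFDerivAt)
  exact (InnerProductSpace.toDual ℝ F).injective (sub_eq_zero.1 hderiv)

end Gradient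

section Consensus

variable {ι F : Type*} [Fintype ι] [NormedAddCommGroup F] [InnerProductSpace ℝ F]

lemma sum_inner_pi_single_sub [DecidableEq ι] (G : ι → F) (v : F) (i j : ι) :
    ∑ k, ⟪G k, (Pi.single i v - Pi.single j v : ι → F) k⟫ = ⟪G i - G j, v⟫ := by
  have hsingle : ∀ l, ∑ k, ⟪G k, (Pi.single l v : ι → F) k⟫ = ⟪G l, v⟫ := fun l => by
    rw [Fintype.sum_eq_single l fun k hk => by simp [hk]]
    simp
  simp only [Pi.sub_apply, inner_sub_right, Finset.sum_sub_distrib, hsingle, inner_sub_left]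

lemma hasGradientAt_eq_of_isMinOn_sum [CompleteSpace F] {Φ : ι → F → ℝ} {x G : ι → F}
    (hx : ∑ k, x k = 0) (hG : ∀ k, HasGradientAt (Φ k) (G k) (x k))
    (hmin : IsMinOn (fun y : ι → F => ∑ k, Φ k (y k)) {y | ∑ k, y k = 0} x) (i j : ι) :
    G i = G j := by
  classical
  set w : ι → F := Pi.single i (G i - G j) - Pi.single j (G i - G j)
  have hw : ∑ k, w k = 0 := by simp [w, Finset.sum_sub_distrib]
  have hderiv : HasDerivAt (fun t : ℝ => ∑ k, Φ k (x k + t • w k)) (∑ k, ⟪G k, w k⟫) 0 :=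
    HasDerivAt.fun_sum fun k _ => (hG k).hasLineDerivAt (w k)
  have hline : IsLocalMin (fun t : ℝ => ∑ k, Φ k (x k + t • w k)) 0 :=
    Eventually.of_forall fun t => by
      simpa using hmin (show ∑ k, (x k + t • w k) = 0 by
        simp [Finset.sum_add_distrib, ← Finset.smul_sum, hx, hw])
  have hzero := hline.hasDerivAt_eq_zero hderiv
  rw [sum_inner_pi_single_sub, real_inner_self_eq_norm_sq] at hzero
  exact sub_eq_zero.1 (norm_eq_zero.1 (pow_eq_zero_iff two_ne_zero |>.1 hzero))

lemma isMinOn_sum_of_isMaxOn_inner_sub {f : ι → F → ℝ} {y : ι → F} (hy : ∑ k, y k = 0)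
    {s : F} (hs : ∀ k, IsMaxOn (fun x => ⟪y k, x⟫ - f k x) univ s) :
    IsMinOn (fun z => ∑ k, f k z) univ s := by
  intro z _
  have hsum : ∑ k, ⟪y k, z - s⟫ = 0 := by rw [← sum_inner, hy, inner_zero_left]
  have hk : ∀ k, f k s + ⟪y k, z - s⟫ ≤ f k z := fun k => by
    have : ⟪y k, z⟫ - f k z ≤ ⟪y k, s⟫ - f k s := hs k (mem_univ z)
    rw [inner_sub_right]
    linarith
  calc ∑ k, f k s = ∑ k, (f k s + ⟪y k, z - s⟫) := by rw [Finset.sum_add_distrib, hsum, add_zero]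
    _ ≤ ∑ k, f k z := Finset.sum_le_sum fun k _ => hk k

end Consensus

section Fenchel

variable {n : ℕ} {f : EuclideanSpace ℝ (Fin n) → ℝ}

local notation "E" => EuclideanSpace ℝ (Fin n)

lemma Coercive1.tendsto_sub_inner (hc : Coercive1 f) (y : E) :
    Tendsto (fun x => f x - ⟪y, x⟫) (cocompact E) atTop := by
  rw [← Metric.cobounded_eq_cocompact, ← comap_norm_atTop]
  have hnorm : Tendsto (fun x : E => ‖x‖) (comap norm atTop) atTop := tendsto_comap
  refine tendsto_atTop_mono' _ ?_
    (hnorm.atTop_mul_atTop₀ (tendsto_atTop_add_const_right _ (-‖y‖) hc))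
  filter_upwards [hnorm.eventually_gt_atTop 0] with x hx
  have : ⟪y, x⟫ ≤ ‖y‖ * ‖x‖ := real_inner_le_norm y x
  rw [mul_add, mul_div_cancel₀ _ hx.ne']
  linarith

lemma Coercive1.exists_isMaxOn_inner_sub (hf : Continuous f) (hc : Coercive1 f) (y : E) :
    ∃ x₀, IsMaxOn (fun x => ⟪y, x⟫ - f x) univ x₀ := by
  have hcont : Continuous fun x => f x - ⟪y, x⟫ := by fun_prop
  obtain ⟨x₀, hx₀⟩ := hcont.exists_forall_le (hc.tendsto_sub_inner y)
  exact ⟨x₀, fun x _ => show ⟪y, x⟫ - f x ≤ ⟪y, x₀⟫ - f x₀ by linarith [hx₀ x]⟩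

lemma inner_sub_le_fenchel (hf : Continuous f) (hc : Coercive1 f) (y x : E) :
    ⟪y, x⟫ - f x ≤ fenchel f y := by
  obtain ⟨x₀, hx₀⟩ := hc.exists_isMaxOn_inner_sub hf y
  exact le_csSup ⟨_, forall_mem_range.2 fun x => hx₀ (mem_univ x)⟩ (mem_range_self x)

lemma fenchel_eq_of_isMaxOn {y x₀ : E} (hx₀ : IsMaxOn (fun x => ⟪y, x⟫ - f x) univ x₀) :
    fenchel f y = ⟪y, x₀⟫ - f x₀ :=
  IsGreatest.csSup_eq ⟨mem_range_self x₀, forall_mem_range.2 fun x => hx₀ (mem_univ x)⟩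

lemma isMaxOn_inner_sub_of_hasGradientAt_fenchel (hf : Continuous f) (hc : Coercive1 f)
    {G y : E} (hG : HasGradientAt (fenchel f) G y) :
    IsMaxOn (fun x => ⟪y, x⟫ - f x) univ G := by
  obtain ⟨x₀, hx₀⟩ := hc.exists_isMaxOn_inner_sub hf y
  suffices G = x₀ from this ▸ hx₀
  refine hG.eq_of_forall_add_inner_le fun y' => ?_
  have := inner_sub_le_fenchel hf hc y' x₀
  rw [fenchel_eq_of_isMaxOn hx₀, inner_sub_right, real_inner_comm y' x₀, real_inner_comm y x₀]
  linarith

lemma isMinOn_sum_fenchel_of_isMaxOn {ι : Type*} [Fintype ι] {f : ι → E → ℝ}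
    (hf : ∀ k, Continuous (f k)) (hc : ∀ k, Coercive1 (f k)) {x : ι → E} (hx : ∑ k, x k = 0)
    {s : E} (hs : ∀ k, IsMaxOn (fun z => ⟪x k, z⟫ - f k z) univ s) :
    IsMinOn (fun y : ι → E => ∑ k, fenchel (f k) (y k)) {y | ∑ k, y k = 0} x := by
  intro y (hy : ∑ k, y k = 0)
  have hsum : ∑ k, ⟪y k - x k, s⟫ = 0 := by
    rw [← sum_inner, Finset.sum_sub_distrib, hy, hx, sub_zero, inner_zero_left]
  have hk : ∀ k, fenchel (f k) (x k) + ⟪y k - x k, s⟫ ≤ fenchel (f k) (y k) := fun k => by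
    have := inner_sub_le_fenchel (hf k) (hc k) (y k) s
    rw [fenchel_eq_of_isMaxOn (hs k), inner_sub_left]
    linarith
  calc ∑ k, fenchel (f k) (x k) = ∑ k, (fenchel (f k) (x k) + ⟪y k - x k, s⟫) := by
        rw [Finset.sum_add_distrib, hsum, add_zero]
    _ ≤ ∑ k, fenchel (f k) (y k) := Finset.sum_le_sum fun k _ => hk k

end Fenchel

theorem stmt17_general {n m : ℕ} (h : Fin m → EuclideanSpace ℝ (Fin n) → ℝ)
    (hdiff : ∀ i, Differentiable ℝ (h i))
    (hcoer : ∀ i, Coercive1 (h i))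
    (g : Fin m → EuclideanSpace ℝ (Fin n) → EuclideanSpace ℝ (Fin n))
    (hg : ∀ i y, HasGradientAt (fenchel (h i)) (g i y) y)
    (ystar : Fin m → EuclideanSpace ℝ (Fin n)) (hfeas : ∑ i, ystar i = 0) :
    ((∀ y : Fin m → EuclideanSpace ℝ (Fin n), (∑ i, y i) = 0 →
        ∑ i, fenchel (h i) (ystar i) ≤ ∑ i, fenchel (h i) (y i))
      ↔ ∀ i j, g i (ystar i) = g j (ystar j)) ∧
    ((∀ y : Fin m → EuclideanSpace ℝ (Fin n), (∑ i, y i) = 0 →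
        ∑ i, fenchel (h i) (ystar i) ≤ ∑ i, fenchel (h i) (y i)) →
      ∀ i z, ∑ j, h j (g i (ystar i)) ≤ ∑ j, h j z) := by
  have hcont : ∀ i, Continuous (h i) := fun i => (hdiff i).continuous
  have hmax : ∀ i j, g i (ystar i) = g j (ystar j) →
      IsMaxOn (fun x => ⟪ystar j, x⟫ - h j x) univ (g i (ystar i)) := fun i j hij =>
    hij ▸ isMaxOn_inner_sub_of_hasGradientAt_fenchel (hcont j) (hcoer j) (hg j (ystar j))
  have hgrad_eq : (∀ y : Fin m → EuclideanSpace ℝ (Fin n), (∑ i, y i) = 0 →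
      ∑ i, fenchel (h i) (ystar i) ≤ ∑ i, fenchel (h i) (y i)) →
      ∀ i j, g i (ystar i) = g j (ystar j) := fun hopt =>
    hasGradientAt_eq_of_isMinOn_sum hfeas (fun k => hg k (ystar k)) hopt
  refine ⟨⟨hgrad_eq, fun hgrad y hy => ?_⟩, fun hopt i z => ?_⟩
  · rcases isEmpty_or_nonempty (Fin m) with _ | ⟨⟨i⟩⟩
    · simp
    · exact isMinOn_sum_fenchel_of_isMaxOn hcont hcoer hfeas
        (fun k => hmax i k (hgrad i k)) hy
  · exact isMinOn_sum_of_isMaxOn_inner_sub hfeas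
      (fun k => hmax i k (hgrad_eq hopt i k)) (mem_univ z)

theorem stmt17 {n m : ℕ} (h : Fin m → EuclideanSpace ℝ (Fin n) → ℝ)
    (hsc : ∀ i, StrictConvexOn ℝ Set.univ (h i))
    (hdiff : ∀ i, Differentiable ℝ (h i))
    (hcoer : ∀ i, Coercive1 (h i))
    (g : Fin m → EuclideanSpace ℝ (Fin n) → EuclideanSpace ℝ (Fin n))
    (hg : ∀ i y, HasGradientAt (fenchel (h i)) (g i y) y)
    (ystar : Fin m → EuclideanSpace ℝ (Fin n)) (hfeas : ∑ i, ystar i = 0) :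
    ((∀ y : Fin m → EuclideanSpace ℝ (Fin n), (∑ i, y i) = 0 →
        ∑ i, fenchel (h i) (ystar i) ≤ ∑ i, fenchel (h i) (y i))
      ↔ ∀ i j, g i (ystar i) = g j (ystar j)) ∧
    ((∀ y : Fin m → EuclideanSpace ℝ (Fin n), (∑ i, y i) = 0 →
        ∑ i, fenchel (h i) (ystar i) ≤ ∑ i, fenchel (h i) (y i)) →
      ∀ i z, ∑ j, h j (g i (ystar i)) ≤ ∑ j, h j z) :=
  stmt17_general h hdiff hcoer g hg ystar hfeas
end
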